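/- arXiv:1705.01675 — 2 statements merged into one kernel-verified Lean document; each statement's English description precedes it below -/
import Mathlib

section
/- Strong duality for the SOCP with fixed commitments: Assume the MIQP is feasible, a_k ≠ 0, c_k ≥ 0, r_k > 0 for all k. Let z* be an optimal commitment vector. Then the optimal value of the primal SOCP (min Σ_k c_k x_k + d_k z*_k + r_k y_k s.t. Σ_k a_k x_k = b_0, g_k x_k + h_k z*_k ≥ b_k, (y_k+1, y_k−1, 2(x_k−x_k^0)) ∈ K³, x_k, y_k ≥ 0) equals the optimal value of its conic dual (max b_0 p_0 + Σ_k (b_k q_k + z*_k p_k − γ_k + α_k + 2β_k x_k^0) s.t. c_k − a_k p_0 − g_k q_k − 2β_k ≥ 0, d_k − h_k q_k − p_k ≥ 0, r_k − γ_k − α_k ≥ 0, (γ_k, α_k, β_k) ∈ K³, q_k ≥ 0), and both optima are attained. -/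
/-- Membership in the second-order cone `K³`. -/
def SOC3 (w0 w1 w2 : ℝ) : Prop := w0 ≥ Real.sqrt (w1 ^ 2 + w2 ^ 2)

/-!
With `z = z*` fixed, `x*` minimizes the separable convex quadratic
`f(x) = ∑ (c x + d z* + r (x - x⁰)²)` over `{∑ a x = b₀} ∩ ∏ F_k`, where each
`F_k = {x ≥ 0, g x + h z* ≥ b}` is an interval. The first-order condition says that `x*` also
minimizes the linear form `∇f(x*) · x` there. Shifting `∑ a x` from one coordinate to another
shows that the ratios `∂_k f / a_k` of coordinates that can raise `∑ a x` dominate those of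
coordinates that can lower it, so a price `p₀` fits in between; a one-dimensional Farkas argument
on each interval then produces `q_k ≥ 0` with complementary slackness. Together with the cone
multiplier `r ((1 + u²)/2, (1 - u²)/2, -u)`, `u = x* - x⁰`, this is a dual feasible point of value
`f(x*)`, which the primal point `(x*, u²)` also attains, and conic weak duality (self-duality of
`K³`) makes both optimal.
-/

theorem SOC3_iff {w0 w1 w2 : ℝ} : SOC3 w0 w1 w2 ↔ 0 ≤ w0 ∧ w1 ^ 2 + w2 ^ 2 ≤ w0 ^ 2 :=
  Real.sqrt_le_iff

theorem SOC3_rotated_iff {y t : ℝ} : SOC3 (y + 1) (y - 1) (2 * t) ↔ t ^ 2 ≤ y := by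
  rw [SOC3_iff]
  constructor
  · rintro ⟨-, h⟩
    nlinarith
  · intro h
    constructor <;> nlinarith [sq_nonneg t]

theorem SOC3.mul_add_mul_add_mul_nonneg {u0 u1 u2 v0 v1 v2 : ℝ} (hu : SOC3 u0 u1 u2)
    (hv : SOC3 v0 v1 v2) : 0 ≤ u0 * v0 + u1 * v1 + u2 * v2 := by
  obtain ⟨hu0, hu⟩ := SOC3_iff.mp hu
  obtain ⟨hv0, hv⟩ := SOC3_iff.mp hv
  have cauchy_schwarz : (u1 * v1 + u2 * v2) ^ 2 ≤ (u0 * v0) ^ 2 := by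
    nlinarith [sq_nonneg (u1 * v2 - u2 * v1), mul_le_mul hu hv (by positivity) (sq_nonneg u0)]
  nlinarith [abs_le_of_sq_le_sq' cauchy_schwarz (mul_nonneg hu0 hv0)]

theorem IsMinOn.sum_deriv_mul_sub_nonneg {ι : Type*} [Fintype ι] {φ : ι → ℝ → ℝ} {φ' : ι → ℝ}
    {S : Set (ι → ℝ)} {xs x : ι → ℝ} (hmin : IsMinOn (fun x ↦ ∑ i, φ i (x i)) S xs)
    (hS : Convex ℝ S) (hφ : ∀ i, HasDerivAt (φ i) (φ' i) (xs i)) (hxs : xs ∈ S) (hx : x ∈ S) :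
    0 ≤ ∑ i, φ' i * (x i - xs i) := by
  have hderiv : HasFDerivAt (fun x ↦ ∑ i, φ i (x i))
      (∑ i, φ' i • ContinuousLinearMap.proj (R := ℝ) (φ := fun _ : ι ↦ ℝ) i) xs :=
    HasFDerivAt.fun_sum fun i _ ↦ (hφ i).comp_hasFDerivAt xs (hasFDerivAt_apply i xs)
  simpa using hmin.localize.hasFDerivWithinAt_nonneg hderiv.hasFDerivWithinAt
    (sub_mem_posTangentConeAt_of_segment_subset (hS.segment_subset hxs hx))

theorem exists_le_le_of_forall_le {α : Type*} [ConditionallyCompleteLattice α] {s t : Set α}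
    (hs : BddAbove s) (ht : BddBelow t) (h : ∀ x ∈ s, ∀ y ∈ t, x ≤ y) :
    ∃ p, (∀ x ∈ s, x ≤ p) ∧ ∀ y ∈ t, p ≤ y := by
  by_cases hs₀ : s.Nonempty
  · exact ⟨sSup s, fun x hx ↦ le_csSup hs hx, fun y hy ↦ csSup_le hs₀ fun x hx ↦ h x hx y hy⟩
  · exact ⟨sInf t, fun x hx ↦ absurd ⟨x, hx⟩ hs₀, fun y hy ↦ csInf_le ht hy⟩

section Multiplier

variable {ι : Type*} [Fintype ι] {F : ι → Set ℝ} {a D xs : ι → ℝ}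

theorem div_le_div_of_forall_sum_mul_sub_nonneg (hF : ∀ i, Convex ℝ (F i))
    (hxs : ∀ i, xs i ∈ F i)
    (h : ∀ x : ι → ℝ, (∀ i, x i ∈ F i) → ∑ i, a i * x i = ∑ i, a i * xs i →
      0 ≤ ∑ i, D i * (x i - xs i))
    {j k : ι} {yj yk : ℝ} (hyj : yj ∈ F j) (hyk : yk ∈ F k)
    (hj : 0 < a j * (yj - xs j)) (hk : a k * (yk - xs k) < 0) :
    D k / a k ≤ D j / a j := by
  classical
  rcases eq_or_ne j k with rfl | hjk
  · rfl
  set s := a j * (yj - xs j)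
  set s' := -(a k * (yk - xs k))
  have hs' : 0 < s' := by linarith
  have haj : a j ≠ 0 := by rintro h0; simp [s, h0] at hj
  have hak : a k ≠ 0 := by rintro h0; simp [h0] at hk
  -- move coordinate `j` up and coordinate `k` down, by the same amount `s s' / (s + s')` of `∑ a x`
  set tj := s' / (s + s')
  set tk := s / (s + s')
  have htj : tj ∈ Set.Icc (0 : ℝ) 1 :=
    ⟨by positivity, div_le_one_of_le₀ (by linarith) (by linarith)⟩
  have htk : tk ∈ Set.Icc (0 : ℝ) 1 :=
    ⟨by positivity, div_le_one_of_le₀ (by linarith) (by linarith)⟩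
  set x := xs + Pi.single j (tj * (yj - xs j)) + Pi.single k (tk * (yk - xs k))
  have hx : ∀ i, x i ∈ F i := by
    intro i
    rcases eq_or_ne i j with rfl | hij
    · simpa [x, hjk] using (hF i).add_smul_sub_mem (hxs i) hyj htj
    rcases eq_or_ne i k with rfl | hik
    · simpa [x, hij] using (hF i).add_smul_sub_mem (hxs i) hyk htk
    · simpa [x, hij, hik] using hxs i
  have hsum : ∑ i, a i * x i = ∑ i, a i * xs i := by
    simp only [x, Pi.add_apply, Pi.single_apply, mul_add, mul_ite, mul_zero,
      Finset.sum_add_distrib, Finset.sum_ite_eq', Finset.mem_univ, ↓reduceIte]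
    field_simp
    ring
  have hgain := h x hx hsum
  simp only [x, add_assoc, Pi.add_apply, Pi.single_apply, add_sub_cancel_left, mul_add, mul_ite,
    mul_zero, Finset.sum_add_distrib, Finset.sum_ite_eq', Finset.mem_univ, ↓reduceIte] at hgain
  have hgain_eq : D j * (tj * (yj - xs j)) + D k * (tk * (yk - xs k)) =
      s * s' / (s + s') * (D j / a j - D k / a k) := by
    simp only [tj, tk, s, s']
    field_simp
    ring
  rw [hgain_eq] at hgain
  exact sub_nonneg.mp ((mul_nonneg_iff_of_pos_left (by positivity)).mp hgain)

theorem exists_multiplier_of_forall_sum_mul_sub_nonneg (hF : ∀ i, Convex ℝ (F i))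
    (ha : ∀ i, a i ≠ 0) (hxs : ∀ i, xs i ∈ F i)
    (h : ∀ x : ι → ℝ, (∀ i, x i ∈ F i) → ∑ i, a i * x i = ∑ i, a i * xs i →
      0 ≤ ∑ i, D i * (x i - xs i)) :
    ∃ p, ∀ i, ∀ y ∈ F i, 0 ≤ (D i - p * a i) * (y - xs i) := by
  set down := (fun k ↦ D k / a k) '' {k | ∃ y ∈ F k, a k * (y - xs k) < 0}
  set up := (fun j ↦ D j / a j) '' {j | ∃ y ∈ F j, 0 < a j * (y - xs j)}
  obtain ⟨p, hdown, hup⟩ : ∃ p, (∀ x ∈ down, x ≤ p) ∧ ∀ y ∈ up, p ≤ y := by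
    refine exists_le_le_of_forall_le ((Set.toFinite _).image _).bddAbove
      ((Set.toFinite _).image _).bddBelow ?_
    rintro _ ⟨k, ⟨yk, hyk, hk⟩, rfl⟩ _ ⟨j, ⟨yj, hyj, hj⟩, rfl⟩
    exact div_le_div_of_forall_sum_mul_sub_nonneg hF hxs h hyj hyk hj hk
  refine ⟨p, fun i y hy ↦ ?_⟩
  have hsplit : (D i - p * a i) * (y - xs i) = (D i / a i - p) * (a i * (y - xs i)) := by
    field_simp [ha i]
  rw [hsplit]
  rcases lt_trichotomy (a i * (y - xs i)) 0 with hneg | hzero | hpos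
  · exact mul_nonneg_of_nonpos_of_nonpos (sub_nonpos.mpr (hdown _ ⟨i, ⟨y, hy, hneg⟩, rfl⟩)) hneg.le
  · simp [hzero]
  · exact mul_nonneg (sub_nonneg.mpr (hup _ ⟨i, ⟨y, hy, hpos⟩, rfl⟩)) hpos.le

theorem exists_multiplier_of_isMinOn {φ : ι → ℝ → ℝ} {φ' : ι → ℝ} (hF : ∀ i, Convex ℝ (F i))
    (ha : ∀ i, a i ≠ 0) (hxs : ∀ i, xs i ∈ F i) (hφ : ∀ i, HasDerivAt (φ i) (φ' i) (xs i))
    (hmin : IsMinOn (fun x ↦ ∑ i, φ i (x i))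
      {x | (∀ i, x i ∈ F i) ∧ ∑ i, a i * x i = ∑ i, a i * xs i} xs) :
    ∃ p, ∀ i, ∀ y ∈ F i, 0 ≤ (φ' i - p * a i) * (y - xs i) := by
  have hS : Convex ℝ {x : ι → ℝ | (∀ i, x i ∈ F i) ∧ ∑ i, a i * x i = ∑ i, a i * xs i} := by
    rintro x ⟨hxF, hx⟩ y ⟨hyF, hy⟩ s t hs ht hst
    refine ⟨fun i ↦ hF i (hxF i) (hyF i) hs ht hst, ?_⟩
    simp only [Pi.add_apply, Pi.smul_apply, smul_eq_mul, mul_add, Finset.sum_add_distrib,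
      mul_left_comm (a _), ← Finset.mul_sum, hx, hy, ← add_mul, hst, one_mul]
  exact exists_multiplier_of_forall_sum_mul_sub_nonneg hF ha hxs fun x hx hsum ↦
    hmin.sum_deriv_mul_sub_nonneg hS hφ ⟨hxs, rfl⟩ ⟨hx, hsum⟩

end Multiplier

theorem exists_multiplier_of_forall_mul_sub_nonneg {g β D xs : ℝ} (hxs : 0 ≤ xs)
    (hgxs : β ≤ g * xs) (h : ∀ x, 0 ≤ x → β ≤ g * x → 0 ≤ D * (x - xs)) :
    ∃ q, 0 ≤ q ∧ 0 ≤ D - g * q ∧ q * (g * xs - β) = 0 ∧ (D - g * q) * xs = 0 := by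
  by_cases hfree : 0 ≤ D ∧ D * xs = 0
  · exact ⟨0, le_rfl, by simpa using hfree.1, by simp, by simpa using hfree.2⟩
  suffices hactive : g ≠ 0 ∧ g * xs = β ∧ 0 ≤ D / g by
    obtain ⟨hg, hβ, hq⟩ := hactive
    have hD : D - g * (D / g) = 0 := by field_simp; ring
    exact ⟨D / g, hq, hD.ge, by simp [hβ], by simp [hD]⟩
  rcases lt_or_ge D 0 with hD | hD
  · have hright : ∀ x, xs < x → g * x < β := fun x hx ↦ by
      by_contra! hfeas
      nlinarith [h x (by linarith) hfeas]
    have hg : g < 0 := by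
      by_contra! hg
      nlinarith [hright (xs + 1) (by linarith)]
    have hβ : g * xs = β := by
      by_contra hne
      have hlt : xs < β / g := by rw [lt_div_iff_of_neg hg, mul_comm]; exact hgxs.lt_of_ne' hne
      exact (hright _ hlt).ne (mul_div_cancel₀ _ hg.ne)
    exact ⟨hg.ne, hβ, div_nonneg_of_nonpos hD.le hg.le⟩
  · have hDxs : D * xs ≠ 0 := fun h0 ↦ hfree ⟨hD, h0⟩
    have hD' : 0 < D := lt_of_le_of_ne hD (by rintro rfl; simp at hDxs)
    have hxs' : 0 < xs := lt_of_le_of_ne hxs (by rintro rfl; simp at hDxs)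
    have hleft : ∀ x, 0 ≤ x → x < xs → g * x < β := fun x hx0 hx ↦ by
      by_contra! hfeas
      nlinarith [h x hx0 hfeas]
    have hg : 0 < g := by
      by_contra! hg
      nlinarith [hleft 0 le_rfl hxs']
    have hβ : g * xs = β := by
      by_contra hne
      have hlt : β / g < xs := by rw [div_lt_iff₀' hg]; exact hgxs.lt_of_ne' hne
      have hinfeasible := hleft _ (le_max_left 0 (β / g)) (max_lt hxs' hlt)
      nlinarith [le_max_right 0 (β / g), mul_div_cancel₀ β hg.ne']
    exact ⟨hg.ne', hβ, div_nonneg hD hg.le⟩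

section SOCP

variable {ι : Type*} [Fintype ι]

def socpPrimalValues (c d a g h b x0 r : ι → ℝ) (b0 : ℝ) (zs : ι → ℝ) : Set ℝ :=
  {v : ℝ | ∃ x y : ι → ℝ,
    (∑ k, a k * x k = b0) ∧ (∀ k, g k * x k + h k * zs k ≥ b k) ∧
    (∀ k, SOC3 (y k + 1) (y k - 1) (2 * (x k - x0 k))) ∧
    (∀ k, 0 ≤ x k) ∧ (∀ k, 0 ≤ y k) ∧
    v = ∑ k, (c k * x k + d k * zs k + r k * y k)}

def socpDualValues (c d a g h b x0 r : ι → ℝ) (b0 : ℝ) (zs : ι → ℝ) : Set ℝ :=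
  {w : ℝ | ∃ (p0 : ℝ) (p q γ α β : ι → ℝ),
    (∀ k, c k - a k * p0 - g k * q k - 2 * β k ≥ 0) ∧
    (∀ k, d k - h k * q k - p k ≥ 0) ∧
    (∀ k, r k - γ k - α k ≥ 0) ∧
    (∀ k, SOC3 (γ k) (α k) (β k)) ∧
    (∀ k, 0 ≤ q k) ∧
    w = b0 * p0 + ∑ k, (b k * q k + zs k * p k - γ k + α k + 2 * β k * x0 k)}

variable {c d a g h b x0 r : ι → ℝ} {b0 : ℝ} {zs : ι → ℝ}

theorem socp_dual_le_primal (hzs : ∀ k, 0 ≤ zs k) {v w : ℝ}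
    (hv : v ∈ socpPrimalValues c d a g h b x0 r b0 zs)
    (hw : w ∈ socpDualValues c d a g h b x0 r b0 zs) : w ≤ v := by
  obtain ⟨x, y, hsum, hineq, hsoc, hx, hy, rfl⟩ := hv
  obtain ⟨p0, p, q, γ, α, β, hcx, hcz, hcy, hcone, hq, rfl⟩ := hw
  rw [← hsum, Finset.sum_mul, ← Finset.sum_add_distrib]
  refine Finset.sum_le_sum fun k _ ↦ ?_
  -- the duality gap of each term is the sum of four slack products and this cone pairing
  have hcone_pairing := (hcone k).mul_add_mul_add_mul_nonneg (hsoc k)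
  linarith [mul_nonneg (hcx k) (hx k), mul_nonneg (hcz k) (hzs k),
    mul_nonneg (hq k) (sub_nonneg.2 (hineq k)), mul_nonneg (hcy k) (hy k)]

theorem mem_socpDualValues_of_forall_le (ha : ∀ k, a k ≠ 0) (hr : ∀ k, 0 ≤ r k) {xs : ι → ℝ}
    (hsum : ∑ k, a k * xs k = b0) (hineq : ∀ k, g k * xs k + h k * zs k ≥ b k)
    (hxs : ∀ k, 0 ≤ xs k)
    (hmin : ∀ x : ι → ℝ, ∑ k, a k * x k = b0 → (∀ k, g k * x k + h k * zs k ≥ b k) →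
      (∀ k, 0 ≤ x k) →
      ∑ k, (c k * xs k + d k * zs k + r k * (xs k - x0 k) ^ 2) ≤
        ∑ k, (c k * x k + d k * zs k + r k * (x k - x0 k) ^ 2)) :
    ∑ k, (c k * xs k + d k * zs k + r k * (xs k - x0 k) ^ 2) ∈
      socpDualValues c d a g h b x0 r b0 zs := by
  set F : ι → Set ℝ := fun k ↦ {t | 0 ≤ t ∧ b k ≤ g k * t + h k * zs k}
  have hF : ∀ k, Convex ℝ (F k) := fun k x hx y hy s t hs ht hst ↦ by
    obtain rfl : t = 1 - s := by linarith
    simp only [F, Set.mem_ofPred_eq, smul_eq_mul] at hx hy ⊢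
    constructor <;> nlinarith
  have hderiv : ∀ k, HasDerivAt (fun t ↦ c k * t + d k * zs k + r k * (t - x0 k) ^ 2)
      (c k + 2 * r k * (xs k - x0 k)) (xs k) := fun k ↦ by
    refine ((((hasDerivAt_id' _).const_mul (c k)).add_const (d k * zs k)).add
      ((((hasDerivAt_id' _).sub_const (x0 k)).pow 2).const_mul (r k))).congr_deriv ?_
    norm_num
    ring
  obtain ⟨p0, hp0⟩ := exists_multiplier_of_isMinOn hF ha (fun k ↦ ⟨hxs k, hineq k⟩) hderiv
    fun x ⟨hx, hxsum⟩ ↦ hmin x (hxsum.trans hsum) (fun k ↦ (hx k).2) fun k ↦ (hx k).1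
  choose q hq hslack hcompl hcompl' using fun k ↦ exists_multiplier_of_forall_mul_sub_nonneg
    (g := g k) (β := b k - h k * zs k) (hxs k)
    (by linarith [hineq k]) fun x hx₀ hx ↦ hp0 k x ⟨hx₀, by linarith⟩
  -- the cone multiplier is `r ((1 + u²)/2, (1 - u²)/2, -u)` with `u = xs - x0`
  refine ⟨p0, fun k ↦ d k - h k * q k, q, fun k ↦ r k * (1 + (xs k - x0 k) ^ 2) / 2,
    fun k ↦ r k * (1 - (xs k - x0 k) ^ 2) / 2, fun k ↦ -(r k * (xs k - x0 k)),
    fun k ↦ by linarith [hslack k], fun k ↦ by simp, fun k ↦ le_of_eq (by ring),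
    fun k ↦ SOC3_iff.mpr ⟨by have := hr k; positivity, le_of_eq (by ring)⟩, hq, ?_⟩
  rw [← hsum, Finset.sum_mul, ← Finset.sum_add_distrib]
  refine Finset.sum_congr rfl fun k _ ↦ ?_
  linear_combination hcompl k + hcompl' k

end SOCP

theorem socp_strong_duality_general (n : ℕ) (c d a g h b x0 r : Fin n → ℝ) (b0 : ℝ)
    (ha : ∀ k, a k ≠ 0) (hr : ∀ k, 0 < r k)
    (zs : Fin n → ℝ) (hzs : ∀ k, zs k = 0 ∨ zs k = 1)
    -- z* is the binary part of an optimal solution of the mixed-integer problem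
    (hopt : ∃ xs : Fin n → ℝ,
      (∑ k, a k * xs k = b0) ∧ (∀ k, g k * xs k + h k * zs k ≥ b k) ∧
      (∀ k, 0 ≤ xs k) ∧
      ∀ x z : Fin n → ℝ,
        (∑ k, a k * x k = b0) → (∀ k, g k * x k + h k * z k ≥ b k) →
        (∀ k, 0 ≤ x k) → (∀ k, z k = 0 ∨ z k = 1) →
        ∑ k, (c k * xs k + d k * zs k + r k * (xs k - x0 k) ^ 2) ≤
          ∑ k, (c k * x k + d k * z k + r k * (x k - x0 k) ^ 2)) :
    ∃ v : ℝ,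
      IsLeast {v : ℝ | ∃ x y : Fin n → ℝ,
        (∑ k, a k * x k = b0) ∧ (∀ k, g k * x k + h k * zs k ≥ b k) ∧
        (∀ k, SOC3 (y k + 1) (y k - 1) (2 * (x k - x0 k))) ∧
        (∀ k, 0 ≤ x k) ∧ (∀ k, 0 ≤ y k) ∧
        v = ∑ k, (c k * x k + d k * zs k + r k * y k)} v ∧
      IsGreatest {w : ℝ | ∃ (p0 : ℝ) (p q γ α β : Fin n → ℝ),
        (∀ k, c k - a k * p0 - g k * q k - 2 * β k ≥ 0) ∧
        (∀ k, d k - h k * q k - p k ≥ 0) ∧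
        (∀ k, r k - γ k - α k ≥ 0) ∧
        (∀ k, SOC3 (γ k) (α k) (β k)) ∧
        (∀ k, 0 ≤ q k) ∧
        w = b0 * p0 + ∑ k, (b k * q k + zs k * p k - γ k + α k + 2 * β k * x0 k)} v := by
  obtain ⟨xs, hsum, hineq, hxs, hmin⟩ := hopt
  have hzs₀ : ∀ k, 0 ≤ zs k := fun k ↦ by rcases hzs k with hk | hk <;> simp [hk]
  set v := ∑ k, (c k * xs k + d k * zs k + r k * (xs k - x0 k) ^ 2)
  have hprimal : v ∈ socpPrimalValues c d a g h b x0 r b0 zs :=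
    ⟨xs, fun k ↦ (xs k - x0 k) ^ 2, hsum, hineq, fun k ↦ SOC3_rotated_iff.mpr le_rfl, hxs,
      fun k ↦ sq_nonneg _, rfl⟩
  have hdual : v ∈ socpDualValues c d a g h b x0 r b0 zs :=
    mem_socpDualValues_of_forall_le ha (fun k ↦ (hr k).le) hsum hineq hxs
      fun x hxsum hxineq hx ↦ hmin x zs hxsum hxineq hx hzs
  exact ⟨v, ⟨hprimal, fun w hw ↦ socp_dual_le_primal hzs₀ hw hdual⟩,
    ⟨hdual, fun w hw ↦ socp_dual_le_primal hzs₀ hprimal hw⟩⟩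

theorem socp_strong_duality (n : ℕ) (c d a g h b x0 r : Fin n → ℝ) (b0 : ℝ)
    (ha : ∀ k, a k ≠ 0) (hc : ∀ k, 0 ≤ c k) (hr : ∀ k, 0 < r k)
    (zs : Fin n → ℝ) (hzs : ∀ k, zs k = 0 ∨ zs k = 1)
    -- z* is the binary part of an optimal solution of the mixed-integer problem
    (hopt : ∃ xs : Fin n → ℝ,
      (∑ k, a k * xs k = b0) ∧ (∀ k, g k * xs k + h k * zs k ≥ b k) ∧
      (∀ k, 0 ≤ xs k) ∧
      ∀ x z : Fin n → ℝ,
        (∑ k, a k * x k = b0) → (∀ k, g k * x k + h k * z k ≥ b k) →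
        (∀ k, 0 ≤ x k) → (∀ k, z k = 0 ∨ z k = 1) →
        ∑ k, (c k * xs k + d k * zs k + r k * (xs k - x0 k) ^ 2) ≤
          ∑ k, (c k * x k + d k * z k + r k * (x k - x0 k) ^ 2)) :
    ∃ v : ℝ,
      IsLeast {v : ℝ | ∃ x y : Fin n → ℝ,
        (∑ k, a k * x k = b0) ∧ (∀ k, g k * x k + h k * zs k ≥ b k) ∧
        (∀ k, SOC3 (y k + 1) (y k - 1) (2 * (x k - x0 k))) ∧
        (∀ k, 0 ≤ x k) ∧ (∀ k, 0 ≤ y k) ∧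
        v = ∑ k, (c k * x k + d k * zs k + r k * y k)} v ∧
      IsGreatest {w : ℝ | ∃ (p0 : ℝ) (p q γ α β : Fin n → ℝ),
        (∀ k, c k - a k * p0 - g k * q k - 2 * β k ≥ 0) ∧
        (∀ k, d k - h k * q k - p k ≥ 0) ∧
        (∀ k, r k - γ k - α k ≥ 0) ∧
        (∀ k, SOC3 (γ k) (α k) (β k)) ∧
        (∀ k, 0 ≤ q k) ∧
        w = b0 * p0 + ∑ k, (b k * q k + zs k * p k - γ k + α k + 2 * β k * x0 k)} v :=
  socp_strong_duality_general n c d a g h b x0 r b0 ha hr zs hzs hopt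
end

section
/- Individual optimality under equilibrium prices: Fix k and suppose dual multipliers (p_0*, p_k*, q_k*, γ_k*, α_k*, β_k*) satisfy the dual feasibility conditions c_k − a_k p_0* − g_k q_k* − 2β_k* ≥ 0, d_k − h_k q_k* − p_k* ≥ 0, r_k − γ_k* − α_k* ≥ 0, (γ_k*, α_k*, β_k*) ∈ K³, q_k* ≥ 0, and a primal point (x_k*, y_k*, z_k*) with x_k*, y_k* ≥ 0, z_k* ∈ {0,1}, g_k x_k* + h_k z_k* ≥ b_k, (y_k*+1, y_k*−1, 2(x_k*−x_k^0)) ∈ K³, satisfying the complementarity conditions: (c_k − a_k p_0* − g_k q_k* − 2β_k*)·x_k* = 0, (d_k − h_k q_k* − p_k*)·z_k* = 0, (r_k − γ_k* − α_k*)·y_k* = 0, q_k*·(g_k x_k* + h_k z_k* − b_k) = 0, and (y_k*+1, y_k*−1, 2(x_k*−x_k^0))ᵀ(γ_k*, α_k*, β_k*) = 0. Then (x_k*, y_k*, z_k*) minimizes c_k x_k + d_k z_k + r_k y_k − p_0* a_k x_k − p_k* z_k over all (x_k, y_k, z_k) with x_k, y_k ≥ 0, z_k ∈ {0,1}, g_k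 x_k + h_k z_k ≥ b_k, and (y_k+1, y_k−1, 2(x_k−x_k^0)) ∈ K³. -/
theorem SOC3.inner_nonneg {u₀ u₁ u₂ v₀ v₁ v₂ : ℝ} (hu : SOC3 u₀ u₁ u₂) (hv : SOC3 v₀ v₁ v₂) :
    0 ≤ u₀ * v₀ + u₁ * v₁ + u₂ * v₂ := by
  have cauchy_schwarz : |u₁ * v₁ + u₂ * v₂| ≤ √(u₁ ^ 2 + u₂ ^ 2) * √(v₁ ^ 2 + v₂ ^ 2) := by
    rw [← Real.sqrt_mul (by positivity)]
    exact Real.abs_le_sqrt (by nlinarith [sq_nonneg (u₁ * v₂ - u₂ * v₁)])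
  have norms_le : √(u₁ ^ 2 + u₂ ^ 2) * √(v₁ ^ 2 + v₂ ^ 2) ≤ u₀ * v₀ :=
    mul_le_mul hu hv (Real.sqrt_nonneg _) ((Real.sqrt_nonneg _).trans hu)
  linarith [neg_abs_le (u₁ * v₁ + u₂ * v₂)]

section

variable {c d a g h b x0 r p0 p q γ α β : ℝ}

theorem dual_value_le_cost (hd1 : 0 ≤ c - a * p0 - g * q - 2 * β) (hd2 : 0 ≤ d - h * q - p)
    (hd3 : 0 ≤ r - γ - α) (hd4 : SOC3 γ α β) (hd5 : 0 ≤ q) {x y z : ℝ} (hx : 0 ≤ x)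
    (hy : 0 ≤ y) (hz : 0 ≤ z) (hop : b ≤ g * x + h * z)
    (hcone : SOC3 (y + 1) (y - 1) (2 * (x - x0))) :
    q * b - γ + α + 2 * x0 * β ≤ c * x + d * z + r * y - p0 * (a * x) - p * z := by
  linear_combination mul_nonneg hd1 hx + mul_nonneg hd2 hz + mul_nonneg hd3 hy +
    mul_nonneg hd5 (sub_nonneg.2 hop) + hcone.inner_nonneg hd4

theorem cost_eq_dual_value {x y z : ℝ} (hc1 : (c - a * p0 - g * q - 2 * β) * x = 0)
    (hc2 : (d - h * q - p) * z = 0) (hc3 : (r - γ - α) * y = 0)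
    (hc4 : q * (g * x + h * z - b) = 0)
    (hc5 : (y + 1) * γ + (y - 1) * α + 2 * (x - x0) * β = 0) :
    c * x + d * z + r * y - p0 * (a * x) - p * z = q * b - γ + α + 2 * x0 * β := by
  linear_combination hc1 + hc2 + hc3 + hc4 + hc5

end

theorem individual_optimality_general (c d a g h b x0 r : ℝ)
    (p0s ps qs γs αs βs : ℝ)
    (hd1 : c - a * p0s - g * qs - 2 * βs ≥ 0)
    (hd2 : d - h * qs - ps ≥ 0)
    (hd3 : r - γs - αs ≥ 0)
    (hd4 : SOC3 γs αs βs)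
    (hd5 : 0 ≤ qs)
    (xs ys zs : ℝ)
    (hc1 : (c - a * p0s - g * qs - 2 * βs) * xs = 0)
    (hc2 : (d - h * qs - ps) * zs = 0)
    (hc3 : (r - γs - αs) * ys = 0)
    (hc4 : qs * (g * xs + h * zs - b) = 0)
    (hc5 : (ys + 1) * γs + (ys - 1) * αs + 2 * (xs - x0) * βs = 0) :
    ∀ x y z : ℝ, 0 ≤ x → 0 ≤ y → (z = 0 ∨ z = 1) →
      g * x + h * z ≥ b → SOC3 (y + 1) (y - 1) (2 * (x - x0)) →
      c * xs + d * zs + r * ys - p0s * (a * xs) - ps * zs ≤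
        c * x + d * z + r * y - p0s * (a * x) - ps * z := by
  intro x y z hx hy hz hop hcone
  have hz_nonneg : 0 ≤ z := by rcases hz with rfl | rfl <;> norm_num
  rw [cost_eq_dual_value hc1 hc2 hc3 hc4 hc5]
  exact dual_value_le_cost hd1 hd2 hd3 hd4 hd5 hx hy hz_nonneg hop hcone

theorem individual_optimality (c d a g h b x0 r : ℝ) (hr : 0 < r)
    (p0s ps qs γs αs βs : ℝ)
    (hd1 : c - a * p0s - g * qs - 2 * βs ≥ 0)
    (hd2 : d - h * qs - ps ≥ 0)
    (hd3 : r - γs - αs ≥ 0)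
    (hd4 : SOC3 γs αs βs)
    (hd5 : 0 ≤ qs)
    (xs ys zs : ℝ)
    (hx : 0 ≤ xs) (hy : 0 ≤ ys) (hz : zs = 0 ∨ zs = 1)
    (hop : g * xs + h * zs ≥ b)
    (hcone : SOC3 (ys + 1) (ys - 1) (2 * (xs - x0)))
    (hc1 : (c - a * p0s - g * qs - 2 * βs) * xs = 0)
    (hc2 : (d - h * qs - ps) * zs = 0)
    (hc3 : (r - γs - αs) * ys = 0)
    (hc4 : qs * (g * xs + h * zs - b) = 0)
    (hc5 : (ys + 1) * γs + (ys - 1) * αs + 2 * (xs - x0) * βs = 0) :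
    ∀ x y z : ℝ, 0 ≤ x → 0 ≤ y → (z = 0 ∨ z = 1) →
      g * x + h * z ≥ b → SOC3 (y + 1) (y - 1) (2 * (x - x0)) →
      c * xs + d * zs + r * ys - p0s * (a * xs) - ps * zs ≤
        c * x + d * z + r * y - p0s * (a * x) - ps * z :=
  individual_optimality_general c d a g h b x0 r p0s ps qs γs αs βs hd1 hd2 hd3 hd4 hd5 xs ys zs hc1
    hc2 hc3 hc4 hc5
end
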